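/- arXiv:1301.6240 — 2 statements merged into one kernel-verified Lean document; each statement's English description precedes it below -/
import Mathlib

section
/- Let r be an odd prime and q a prime power with gcd(r,q)=1, and let e be the multiplicative order of q modulo r. Then the r-part of Φ_i(q) equals the r-part of q^e - 1 if i = e; equals r if i = e·r^f for some f ≥ 1; and equals 1 otherwise. -/
/-!
The values `Φ_d(q)` for `d ∣ n` multiply to `q ^ n - 1`. Modulo `r`, `q` is a root of `Φ_d`
exactly when the `r`-free part of `d` is the order `e` of `q`, so `r ∣ Φ_d(q)` iff `d = e r^g`.
Hence `v_r(q ^ (e r^f) - 1) = ∑_{g ≤ f} v_r(Φ_{e r^g}(q))`, while lifting the exponent gives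
`v_r(q ^ (e r^f) - 1) = v_r(q ^ e - 1) + f`. Taking `f = 0`, and comparing `f` with `f - 1`,
yields the first two cases; all other `Φ_i(q)` are prime to `r`.
-/

open Polynomial Finset

theorem Nat.exists_eq_mul_pow_iff_ordCompl_eq {p i m : ℕ} (hp : p.Prime) (hm : ¬p ∣ m) :
    (∃ f, i = m * p ^ f) ↔ ordCompl[p] i = m := by
  constructor
  · rintro ⟨f, rfl⟩
    rw [mul_comm, Nat.ordCompl_pow_mul_of_not_dvd f hp hm]
  · intro h
    exact ⟨i.factorization p, by rw [← h, mul_comm, Nat.ordProj_mul_ordCompl_eq_self]⟩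

namespace ZMod

variable {p : ℕ} [Fact p.Prime] {a : ZMod p}

theorem orderOf_pos_of_ne_zero (ha : a ≠ 0) : 0 < orderOf a :=
  Nat.pos_of_dvd_of_pos (orderOf_dvd_card_sub_one ha)
    (Nat.sub_pos_of_lt (Fact.out : p.Prime).one_lt)

theorem not_dvd_orderOf_of_ne_zero (ha : a ≠ 0) : ¬p ∣ orderOf a := fun h => by
  have := (Fact.out : p.Prime).one_lt
  have := Nat.le_of_dvd (orderOf_pos_of_ne_zero ha) h
  have := Nat.le_of_dvd (by omega) (orderOf_dvd_card_sub_one ha)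
  omega

theorem intCast_pow_eq_one_iff_dvd {n : ℕ} (q : ℤ) (m : ℕ) :
    (q : ZMod n) ^ m = 1 ↔ (n : ℤ) ∣ q ^ m - 1 := by
  rw [← intCast_zmod_eq_zero_iff_dvd]
  push_cast
  exact sub_eq_zero.symm

end ZMod

section padicValInt

variable {r : ℕ} [hr : Fact r.Prime]

theorem padicValInt_eq_emultiplicity {z : ℤ} (hz : z ≠ 0) :
    (padicValInt r z : ℕ∞) = emultiplicity (r : ℤ) z := by
  rw [padicValInt, padicValNat_eq_emultiplicity (Int.natAbs_ne_zero.2 hz),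
    Int.emultiplicity_natAbs]

theorem padicValInt_prod {ι : Type*} (s : Finset ι) {f : ι → ℤ} (hf : ∀ i ∈ s, f i ≠ 0) :
    padicValInt r (∏ i ∈ s, f i) = ∑ i ∈ s, padicValInt r (f i) := by
  have h := Finset.emultiplicity_prod (Nat.prime_iff_prime_int.1 hr.out) s f
  rw [← padicValInt_eq_emultiplicity (prod_ne_zero_iff.2 hf),
    sum_congr rfl fun i hi => (padicValInt_eq_emultiplicity (hf i hi)).symm] at h
  exact_mod_cast h

theorem padicValInt_pow_sub_one_of_dvd (hodd : Odd r) {x : ℤ} (hx : 1 < x)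
    (hrx : (r : ℤ) ∣ x - 1) {n : ℕ} (hn : n ≠ 0) :
    padicValInt r (x ^ n - 1) = padicValInt r (x - 1) + padicValNat r n := by
  have hrx' : ¬(r : ℤ) ∣ x := fun h =>
    (Nat.prime_iff_prime_int.1 hr.out).not_dvd_one (by simpa using dvd_sub h hrx)
  have h := Int.emultiplicity_pow_sub_pow hr.out hodd hrx hrx' n
  have hxn : x ^ n - 1 ≠ 0 := sub_ne_zero.2 (one_lt_pow₀ hx hn).ne'
  rw [one_pow, ← padicValNat_eq_emultiplicity hn, ← padicValInt_eq_emultiplicity hxn,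
    ← padicValInt_eq_emultiplicity (sub_ne_zero.2 hx.ne')] at h
  exact_mod_cast h

end padicValInt

theorem pow_sub_one_eq_prod_eval_cyclotomic {R : Type*} [CommRing R] (x : R) {n : ℕ}
    (hn : 0 < n) : x ^ n - 1 = ∏ d ∈ n.divisors, (cyclotomic d R).eval x := by
  simpa [eval_prod] using congrArg (eval x) (prod_cyclotomic_eq_X_pow_sub_one hn R).symm

theorem Polynomial.intCast_eval_cyclotomic {R : Type*} [Ring R] (n : ℕ) (x : ℤ) :
    (((cyclotomic n ℤ).eval x : ℤ) : R) = (cyclotomic n R).eval (x : R) := by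
  rw [← map_cyclotomic_int n R, eval_intCast_map, eq_intCast, Int.cast_id]

section Cyclotomic

variable {r : ℕ} [hr : Fact r.Prime] {q : ℤ}

theorem orderOf_intCast_pos (hrq : ¬(r : ℤ) ∣ q) : 0 < orderOf (q : ZMod r) :=
  ZMod.orderOf_pos_of_ne_zero (by rwa [Ne, ZMod.intCast_zmod_eq_zero_iff_dvd])

theorem dvd_eval_cyclotomic_iff (hrq : ¬(r : ℤ) ∣ q) {i : ℕ} (hi : i ≠ 0) :
    (r : ℤ) ∣ (cyclotomic i ℤ).eval q ↔ ∃ f, i = orderOf (q : ZMod r) * r ^ f := by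
  have hq0 : (q : ZMod r) ≠ 0 := by rwa [Ne, ZMod.intCast_zmod_eq_zero_iff_dvd]
  rw [Nat.exists_eq_mul_pow_iff_ordCompl_eq hr.out (ZMod.not_dvd_orderOf_of_ne_zero hq0),
    ← ZMod.intCast_zmod_eq_zero_iff_dvd, intCast_eval_cyclotomic]
  set m := ordCompl[r] i
  have : NeZero (m : ZMod r) :=
    ⟨by rw [Ne, ZMod.natCast_eq_zero_iff]; exact Nat.not_dvd_ordCompl hr.out hi⟩
  -- reducing mod `r` kills the `r`-power part of the index
  rw [← Nat.ordProj_mul_ordCompl_eq_self i r, ← IsRoot.def,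
    isRoot_cyclotomic_prime_pow_mul_iff_of_charP, IsPrimitiveRoot.iff_orderOf, eq_comm]

theorem sum_padicValInt_eval_cyclotomic_divisors (hrq : ¬(r : ℤ) ∣ q) (f : ℕ) :
    ∑ d ∈ (orderOf (q : ZMod r) * r ^ f).divisors, padicValInt r ((cyclotomic d ℤ).eval q) =
      ∑ g ∈ range (f + 1),
        padicValInt r ((cyclotomic (orderOf (q : ZMod r) * r ^ g) ℤ).eval q) := by
  have he := orderOf_intCast_pos (r := r) hrq
  have hdvd_iff {g : ℕ} :
      orderOf (q : ZMod r) * r ^ g ∣ orderOf (q : ZMod r) * r ^ f ↔ g ≤ f := by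
    rw [Nat.mul_dvd_mul_iff_left he, Nat.pow_dvd_pow_iff_le_right hr.out.one_lt]
  symm
  rw [← sum_image (f := fun d => padicValInt r ((cyclotomic d ℤ).eval q))
    (g := (orderOf (q : ZMod r) * r ^ ·)) fun g _ h _ hgh =>
    Nat.pow_right_injective hr.out.two_le (Nat.eq_of_mul_eq_mul_left he hgh)]
  apply sum_subset
  · intro d hd
    obtain ⟨g, hg, rfl⟩ := mem_image.1 hd
    exact Nat.mem_divisors.2 ⟨hdvd_iff.2 (Nat.lt_succ_iff.1 (mem_range.1 hg)),
      (Nat.mul_pos he (pow_pos hr.out.pos f)).ne'⟩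
  · intro d hd hd'
    refine padicValInt.eq_zero_of_not_dvd fun hrd => hd' ?_
    obtain ⟨g, rfl⟩ := (dvd_eval_cyclotomic_iff hrq (Nat.pos_of_mem_divisors hd).ne').1 hrd
    exact mem_image_of_mem _
      (mem_range.2 (Nat.lt_succ_of_le (hdvd_iff.1 (Nat.dvd_of_mem_divisors hd))))

theorem padicValInt_pow_orderOf_mul_pow_sub_one_eq_sum (hq : 1 < q) (hrq : ¬(r : ℤ) ∣ q)
    (f : ℕ) :
    padicValInt r (q ^ (orderOf (q : ZMod r) * r ^ f) - 1) =
      ∑ g ∈ range (f + 1),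
        padicValInt r ((cyclotomic (orderOf (q : ZMod r) * r ^ g) ℤ).eval q) := by
  rw [pow_sub_one_eq_prod_eval_cyclotomic q
      (Nat.mul_pos (orderOf_intCast_pos hrq) (pow_pos hr.out.pos f)),
    padicValInt_prod _ fun d _ => (cyclotomic_pos' d hq).ne',
    sum_padicValInt_eval_cyclotomic_divisors hrq]

theorem padicValInt_pow_orderOf_mul_pow_sub_one (hodd : Odd r) (hq : 1 < q)
    (hrq : ¬(r : ℤ) ∣ q) (f : ℕ) :
    padicValInt r (q ^ (orderOf (q : ZMod r) * r ^ f) - 1) =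
      padicValInt r (q ^ orderOf (q : ZMod r) - 1) + f := by
  rw [pow_mul,
    padicValInt_pow_sub_one_of_dvd hodd (one_lt_pow₀ hq (orderOf_intCast_pos hrq).ne')
    ((ZMod.intCast_pow_eq_one_iff_dvd q _).1 (pow_orderOf_eq_one _))
    (pow_ne_zero _ hr.out.ne_zero), padicValNat.prime_pow]

theorem padicValInt_eval_cyclotomic_orderOf (hq : 1 < q) (hrq : ¬(r : ℤ) ∣ q) :
    padicValInt r ((cyclotomic (orderOf (q : ZMod r)) ℤ).eval q) =
      padicValInt r (q ^ orderOf (q : ZMod r) - 1) := by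
  simpa using (padicValInt_pow_orderOf_mul_pow_sub_one_eq_sum hq hrq 0).symm

theorem padicValInt_eval_cyclotomic_orderOf_mul_pow (hodd : Odd r) (hq : 1 < q)
    (hrq : ¬(r : ℤ) ∣ q) {f : ℕ} (hf : f ≠ 0) :
    padicValInt r ((cyclotomic (orderOf (q : ZMod r) * r ^ f) ℤ).eval q) = 1 := by
  obtain ⟨f, rfl⟩ := Nat.exists_eq_add_one_of_ne_zero hf
  have h := padicValInt_pow_orderOf_mul_pow_sub_one hodd hq hrq (f + 1)
  rw [padicValInt_pow_orderOf_mul_pow_sub_one_eq_sum hq hrq, sum_range_succ,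
    ← padicValInt_pow_orderOf_mul_pow_sub_one_eq_sum hq hrq,
    padicValInt_pow_orderOf_mul_pow_sub_one hodd hq hrq] at h
  omega

end Cyclotomic

theorem r_part_cyclotomic_odd_prime
    (r : ℕ) (hr : r.Prime) (hodd : Odd r)
    (q : ℤ) (p k : ℕ) (hp : p.Prime) (hk : 0 < k) (hq : q = (p : ℤ) ^ k)
    (hcop : Int.gcd (r : ℤ) q = 1)
    (e : ℕ) (he : 0 < e) (hdvd : (r : ℤ) ∣ q ^ e - 1)
    (hmin : ∀ m : ℕ, 0 < m → (r : ℤ) ∣ q ^ m - 1 → e ≤ m) :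
    ∀ i : ℕ, 0 < i →
      ((i = e →
          (r : ℤ) ^ padicValInt r ((Polynomial.cyclotomic i ℤ).eval q) =
            (r : ℤ) ^ padicValInt r (q ^ e - 1)) ∧
       ((∃ f : ℕ, 1 ≤ f ∧ i = e * r ^ f) →
          (r : ℤ) ^ padicValInt r ((Polynomial.cyclotomic i ℤ).eval q) = (r : ℤ)) ∧
       (i ≠ e → (¬ ∃ f : ℕ, 1 ≤ f ∧ i = e * r ^ f) →
          (r : ℤ) ^ padicValInt r ((Polynomial.cyclotomic i ℤ).eval q) = 1)) := by
  have : Fact r.Prime := ⟨hr⟩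
  have hq1 : 1 < q := hq ▸ one_lt_pow₀ (by exact_mod_cast hp.one_lt) hk.ne'
  have hrq : ¬(r : ℤ) ∣ q := by
    rw [Int.natCast_dvd]
    exact (Nat.Prime.coprime_iff_not_dvd hr).1 hcop
  have hord : orderOf (q : ZMod r) = e :=
    (orderOf_eq_iff he).2 ⟨(ZMod.intCast_pow_eq_one_iff_dvd q e).2 hdvd, fun m hm hm0 h =>
      (hmin m hm0 ((ZMod.intCast_pow_eq_one_iff_dvd q m).1 h)).not_gt hm⟩
  subst hord
  intro i hi
  refine ⟨?_, ?_, ?_⟩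
  · rintro rfl
    rw [padicValInt_eval_cyclotomic_orderOf hq1 hrq]
  · rintro ⟨f, hf, rfl⟩
    rw [padicValInt_eval_cyclotomic_orderOf_mul_pow hodd hq1 hrq (by omega), pow_one]
  · intro hne hnf
    have hndvd : ¬(r : ℤ) ∣ (cyclotomic i ℤ).eval q := by
      rw [dvd_eval_cyclotomic_iff hrq hi.ne']
      rintro ⟨_ | f, rfl⟩
      · exact hne (mul_one _)
      · exact hnf ⟨f + 1, by omega, rfl⟩
    rw [padicValInt.eq_zero_of_not_dvd hndvd, pow_zero]
end

section
/- Let q be an odd integer. Then the 2-part of Φ_i(q) equals the 2-part of q-1 if i = 1; equals the 2-part of q+1 if i = 2; equals 2 if i = 2^f with f ≥ 2; and equals 1 otherwise (for i not a power of 2, i ≥ 3). -/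
open Polynomial

lemma padicValInt_two_eq_zero_of_odd {x : ℤ} (hx : Odd x) : padicValInt 2 x = 0 := by
  unfold padicValInt
  apply padicValNat.eq_zero_of_not_dvd
  rw [← Int.natAbs_odd] at hx
  exact fun h => (Nat.not_even_iff_odd.mpr hx) (even_iff_two_dvd.mpr h)

lemma padicValInt_two_eq_one {x : ℤ} (h : x % 4 = 2) : padicValInt 2 x = 1 := by
  obtain ⟨m, hm⟩ : (2 : ℤ) ∣ x := by omega
  have hmodd : Odd m := by
    rcases Int.even_or_odd m with he | ho
    · exfalso; obtain ⟨k, hk⟩ := he; omega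
    · exact ho
  have hm0 : m ≠ 0 := by rintro rfl; omega
  rw [hm]
  rw [show (2:ℤ) = ((2:ℕ):ℤ) by norm_num]
  rw [padicValInt.mul (by norm_num) hm0]
  rw [padicValInt_self, padicValInt_two_eq_zero_of_odd hmodd]

lemma odd_eval_of_not_two_pow (q : ℤ) (hq : Odd q) (i : ℕ) (hi : 3 ≤ i)
    (h2 : ¬ ∃ f : ℕ, i = 2 ^ f) : Odd ((Polynomial.cyclotomic i ℤ).eval q) := by
  have h1 : Odd ((Polynomial.cyclotomic i ℤ).eval 1) := by
    by_cases hpp : ∃ p k, Nat.Prime p ∧ p ^ k = i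
    · obtain ⟨p, k, hp, hpk⟩ := hpp
      haveI : Fact p.Prime := ⟨hp⟩
      have hk : k ≠ 0 := by rintro rfl; simp at hpk; omega
      obtain ⟨k, rfl⟩ := Nat.exists_eq_succ_of_ne_zero hk
      have hpodd : Odd p := by
        rcases hp.eq_two_or_odd' with rfl | ho
        · exact absurd ⟨k + 1, hpk.symm⟩ h2
        · exact ho
      rw [← hpk, eval_one_cyclotomic_prime_pow]
      exact_mod_cast (hpodd.natCast : Odd (p : ℤ))
    · rw [eval_one_cyclotomic_not_prime_pow
        (fun {p} hp k hk => hpp ⟨p, k, hp, hk⟩)]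
      exact odd_one
  have hdvd : q - 1 ∣ (cyclotomic i ℤ).eval q - (cyclotomic i ℤ).eval 1 :=
    sub_dvd_eval_sub q 1 _
  have h2d : (2 : ℤ) ∣ q - 1 := by
    obtain ⟨m, rfl⟩ := hq; ring_nf; exact ⟨m, by ring⟩
  obtain ⟨c, hc⟩ := h2d.trans hdvd
  obtain ⟨d, hd⟩ := h1
  exact ⟨c + d, by linarith⟩

theorem two_part_cyclotomic (q : ℤ) (hq : Odd q) :
    ((2 : ℤ) ^ padicValInt 2 ((Polynomial.cyclotomic 1 ℤ).eval q) =
        (2 : ℤ) ^ padicValInt 2 (q - 1)) ∧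
    ((2 : ℤ) ^ padicValInt 2 ((Polynomial.cyclotomic 2 ℤ).eval q) =
        (2 : ℤ) ^ padicValInt 2 (q + 1)) ∧
    (∀ f : ℕ, 2 ≤ f →
        (2 : ℤ) ^ padicValInt 2 ((Polynomial.cyclotomic (2 ^ f) ℤ).eval q) = 2) ∧
    (∀ i : ℕ, 3 ≤ i → (¬ ∃ f : ℕ, i = 2 ^ f) →
        (2 : ℤ) ^ padicValInt 2 ((Polynomial.cyclotomic i ℤ).eval q) = 1) := by
  refine ⟨?_, ?_, ?_, ?_⟩
  · rw [cyclotomic_one, eval_sub, eval_X, eval_one]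
  · rw [cyclotomic_two, eval_add, eval_X, eval_one]
  · intro f hf
    obtain ⟨k, rfl⟩ : ∃ k, f = k + 2 := ⟨f - 2, by omega⟩
    have hval : (cyclotomic (2 ^ (k + 2)) ℤ).eval q = q ^ 2 ^ (k + 1) + 1 := by
      rw [show (2:ℕ) ^ (k+2) = 2 ^ (k + 1 + 1) by ring,
        cyclotomic_prime_pow_eq_geom_sum Nat.prime_two]
      simp [Finset.sum_range_succ, ← pow_mul, pow_succ, add_comm]
    have hsq : q ^ 2 ^ (k + 1) % 4 = 1 := by
      have : q ^ 2 ^ (k + 1) = (q ^ 2 ^ k) ^ 2 := by rw [← pow_mul, pow_succ]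
      rw [this]
      exact Int.sq_mod_four_eq_one_of_odd (hq.pow)
    have : (cyclotomic (2 ^ (k + 2)) ℤ).eval q % 4 = 2 := by
      rw [hval]; omega
    rw [padicValInt_two_eq_one this, pow_one]
  · intro i hi h2
    rw [padicValInt_two_eq_zero_of_odd (odd_eval_of_not_two_pow q hq i hi h2), pow_zero]
end
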